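/- Let H be a real Hilbert space and T a compact linear operator on H. Then w(T) = 0 if and only if for every unit vector x, the rank-one projection x⊗x is numerical-radius orthogonal to T. -/

import Mathlib

/-!
If `⟪T x, x⟫ = c ≠ 0` for a unit vector `x`, then for small `t > 0` the operator
`x ⊗ x - t c T` has numerical radius `< 1 = w(x ⊗ x)`. Indeed, for a unit vector `z` with
`⟪x, z⟫ ≥ 0` and `d = ‖z - x‖`, the gain `⟪x, z⟫² ≤ 1 - d² / 2` is quadratic in `d`, while
`⟪T z, z⟫` moves away from `c` only linearly in `d`; completing the square gives
`⟪(x ⊗ x - t c T) z, z⟫ ≤ 1 - t c² / 2`; replacing `z` by `-z` removes the sign condition.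
-/

open scoped RealInnerProductSpace

/-- Numerical radius of a bounded linear operator on a real inner product space. -/
noncomputable def numRadius {E : Type*} [NormedAddCommGroup E] [InnerProductSpace ℝ E]
    (T : E →L[ℝ] E) : ℝ :=
  sSup {r : ℝ | ∃ x : E, ‖x‖ = 1 ∧ r = |⟪T x, x⟫|}

/-- Numerical-radius orthogonality for real spaces: `T ⊥_w A`. -/
def nrOrth {E : Type*} [NormedAddCommGroup E] [InnerProductSpace ℝ E]
    (T A : E →L[ℝ] E) : Prop :=
  ∀ l : ℝ, numRadius T ≤ numRadius (T + l • A)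

/-- The rank-one operator `u ⊗ v : z ↦ ⟪z, v⟫ u` on a real inner product space. -/
noncomputable def rankOne {E : Type*} [NormedAddCommGroup E] [InnerProductSpace ℝ E]
    (u v : E) : E →L[ℝ] E :=
  (innerSL ℝ v).smulRight u

section NumericalRadius

variable {E : Type*} [NormedAddCommGroup E] [InnerProductSpace ℝ E]

lemma abs_inner_map_self_le_opNorm (T : E →L[ℝ] E) {z : E} (hz : ‖z‖ = 1) :
    |⟪T z, z⟫| ≤ ‖T‖ :=
  calc |⟪T z, z⟫| ≤ ‖T z‖ * ‖z‖ := abs_real_inner_le_norm _ _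
    _ ≤ ‖T‖ * ‖z‖ * ‖z‖ := by gcongr; exact T.le_opNorm z
    _ = ‖T‖ := by rw [hz, mul_one, mul_one]

lemma abs_inner_map_self_sub_le (T : E →L[ℝ] E) {z w : E} (hz : ‖z‖ = 1) (hw : ‖w‖ = 1) :
    |⟪T z, z⟫ - ⟪T w, w⟫| ≤ 2 * ‖T‖ * ‖z - w‖ := by
  have hsplit : ⟪T z, z⟫ - ⟪T w, w⟫ = ⟪T (z - w), z⟫ + ⟪T w, z - w⟫ := by
    rw [map_sub, inner_sub_left, inner_sub_right]; ring
  calc |⟪T z, z⟫ - ⟪T w, w⟫| ≤ |⟪T (z - w), z⟫| + |⟪T w, z - w⟫| := by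
        rw [hsplit]; exact abs_add_le _ _
    _ ≤ ‖T (z - w)‖ * ‖z‖ + ‖T w‖ * ‖z - w‖ :=
        add_le_add (abs_real_inner_le_norm _ _) (abs_real_inner_le_norm _ _)
    _ ≤ ‖T‖ * ‖z - w‖ * ‖z‖ + ‖T‖ * ‖w‖ * ‖z - w‖ := by
        gcongr <;> exact T.le_opNorm _
    _ = 2 * ‖T‖ * ‖z - w‖ := by rw [hz, hw]; ring

lemma numRadius_le {T : E →L[ℝ] E} {b : ℝ} (hb : 0 ≤ b)
    (h : ∀ z : E, ‖z‖ = 1 → |⟪T z, z⟫| ≤ b) : numRadius T ≤ b := by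
  refine Real.sSup_le ?_ hb
  rintro r ⟨z, hz, rfl⟩
  exact h z hz

lemma le_numRadius (T : E →L[ℝ] E) {z : E} (hz : ‖z‖ = 1) : |⟪T z, z⟫| ≤ numRadius T := by
  refine le_csSup ⟨‖T‖, ?_⟩ ⟨z, hz, rfl⟩
  rintro r ⟨w, hw, rfl⟩
  exact abs_inner_map_self_le_opNorm T hw

lemma numRadius_nonneg (T : E →L[ℝ] E) : 0 ≤ numRadius T := by
  refine Real.sSup_nonneg ?_
  rintro r ⟨z, -, rfl⟩
  exact abs_nonneg _

lemma numRadius_eq_zero_iff {T : E →L[ℝ] E} :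
    numRadius T = 0 ↔ ∀ z : E, ‖z‖ = 1 → ⟪T z, z⟫ = 0 := by
  refine ⟨fun h z hz => abs_nonpos_iff.mp (h ▸ le_numRadius T hz), fun h => ?_⟩
  refine le_antisymm (numRadius_le le_rfl fun z hz => ?_) (numRadius_nonneg T)
  rw [h z hz, abs_zero]

lemma numRadius_congr {A B : E →L[ℝ] E} (h : ∀ z : E, ‖z‖ = 1 → ⟪A z, z⟫ = ⟪B z, z⟫) :
    numRadius A = numRadius B := by
  unfold numRadius
  congr 1
  ext r
  constructor <;> rintro ⟨z, hz, rfl⟩ <;> exact ⟨z, hz, by rw [h z hz]⟩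

lemma nrOrth_of_numRadius_eq_zero (A : E →L[ℝ] E) {T : E →L[ℝ] E} (hT : numRadius T = 0) :
    nrOrth A T := by
  intro l
  refine (numRadius_congr fun z hz => ?_).ge
  rw [add_apply, smul_apply, inner_add_left, real_inner_smul_left, numRadius_eq_zero_iff.mp hT z hz, mul_zero, add_zero]

lemma inner_rankOne_self_apply (x z : E) : ⟪rankOne x x z, z⟫ = ⟪x, z⟫ ^ 2 := by
  rw [rankOne, ContinuousLinearMap.smulRight_apply, real_inner_smul_left, innerSL_apply_apply,
    real_inner_comm, sq]

lemma numRadius_rankOne_self {x : E} (hx : ‖x‖ = 1) : numRadius (rankOne x x) = 1 := by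
  refine le_antisymm (numRadius_le zero_le_one fun z hz => ?_) ?_
  · rw [inner_rankOne_self_apply, abs_pow, sq_le_one_iff_abs_le_one]
    simpa [hx, hz] using abs_real_inner_le_norm x z
  · simpa [inner_rankOne_self_apply, real_inner_self_eq_norm_sq, hx]
      using le_numRadius (rankOne x x) hx

lemma sq_inner_sub_smul_inner_map_self_le (T : E →L[ℝ] E) {x z : E} (hx : ‖x‖ = 1)
    (hz : ‖z‖ = 1) (hxz : 0 ≤ ⟪x, z⟫) {t : ℝ} (ht : 0 ≤ t) (htT : 4 * t * ‖T‖ ^ 2 ≤ 1) :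
    ⟪x, z⟫ ^ 2 - t * ⟪T x, x⟫ * ⟪T z, z⟫ ≤ 1 - t * ⟪T x, x⟫ ^ 2 / 2 := by
  set a := ⟪x, z⟫
  set c := ⟪T x, x⟫
  set s := ⟪T z, z⟫
  set d := ‖z - x‖
  have hd : d ^ 2 = 2 - 2 * a := by
    rw [norm_sub_sq_real, hz, hx, real_inner_comm]; ring
  have ha : a ^ 2 ≤ 1 - d ^ 2 / 2 := by
    have : a ≤ 1 := by simpa [hx, hz] using real_inner_le_norm x z
    nlinarith
  have hdrift : -(t * c * (s - c)) ≤ 2 * t * |c| * ‖T‖ * d := by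
    have hsc : |s - c| ≤ 2 * ‖T‖ * d := abs_inner_map_self_sub_le T hz hx
    calc -(t * c * (s - c)) ≤ t * (|c| * |s - c|) := by
          rw [← abs_mul]; nlinarith [neg_abs_le (c * (s - c))]
      _ ≤ t * (|c| * (2 * ‖T‖ * d)) := by gcongr
      _ = 2 * t * |c| * ‖T‖ * d := by ring
  have hsquare : -(d ^ 2 / 2) + 2 * t * |c| * ‖T‖ * d ≤ 2 * t ^ 2 * c ^ 2 * ‖T‖ ^ 2 := by
    have hk : (t * |c| * ‖T‖) ^ 2 = t ^ 2 * c ^ 2 * ‖T‖ ^ 2 := by rw [mul_pow, mul_pow, sq_abs]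
    nlinarith [sq_nonneg (d - 2 * (t * |c| * ‖T‖))]
  have hsmall : 2 * t ^ 2 * c ^ 2 * ‖T‖ ^ 2 ≤ t * c ^ 2 / 2 := by
    have := mul_le_mul_of_nonneg_left htT (mul_nonneg ht (sq_nonneg c))
    nlinarith
  nlinarith

lemma numRadius_rankOne_self_sub_smul_le (T : E →L[ℝ] E) {x : E} (hx : ‖x‖ = 1)
    {t : ℝ} (ht : 0 ≤ t) (htT : 4 * t * ‖T‖ ^ 2 ≤ 1) :
    numRadius (rankOne x x + (-(t * ⟪T x, x⟫)) • T) ≤ 1 - t * ⟪T x, x⟫ ^ 2 / 2 := by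
  set c := ⟪T x, x⟫
  have hcT := abs_le.mp (abs_inner_map_self_le_opNorm T hx)
  have hc : c ^ 2 ≤ ‖T‖ ^ 2 := sq_le_sq' hcT.1 hcT.2
  have htc : t * c ^ 2 ≤ 1 / 4 := by nlinarith
  refine numRadius_le (by linarith) fun z hz => ?_
  have hval : ∀ w : E, ⟪(rankOne x x + (-(t * c)) • T) w, w⟫ = ⟪x, w⟫ ^ 2 - t * c * ⟪T w, w⟫ := by
    intro w
    rw [add_apply, smul_apply, inner_add_left, inner_rankOne_self_apply, real_inner_smul_left]
    ring
  have hupper : ⟪x, z⟫ ^ 2 - t * c * ⟪T z, z⟫ ≤ 1 - t * c ^ 2 / 2 := by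
    rcases le_total 0 ⟪x, z⟫ with hxz | hxz
    · exact sq_inner_sub_smul_inner_map_self_le T hx hz hxz ht htT
    · have := sq_inner_sub_smul_inner_map_self_le T hx (z := -z) (by rwa [norm_neg]) (by
        rw [inner_neg_right]; linarith) ht htT
      simpa [inner_neg_right, inner_neg_left, map_neg] using this
  have hlower : -(⟪x, z⟫ ^ 2 - t * c * ⟪T z, z⟫) ≤ 1 - t * c ^ 2 / 2 := by
    have hs := abs_le.mp (abs_inner_map_self_le_opNorm T hz)
    have : t * c * ⟪T z, z⟫ ≤ t * ‖T‖ ^ 2 := by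
      have : c * ⟪T z, z⟫ ≤ ‖T‖ ^ 2 := by nlinarith
      nlinarith
    nlinarith [sq_nonneg ⟪x, z⟫]
  rw [hval, abs_le]
  constructor <;> linarith

lemma exists_numRadius_rankOne_self_add_smul_lt_one (T : E →L[ℝ] E) {x : E} (hx : ‖x‖ = 1)
    (hTx : ⟪T x, x⟫ ≠ 0) : ∃ l : ℝ, numRadius (rankOne x x + l • T) < 1 := by
  set t := 1 / (4 * (‖T‖ ^ 2 + 1))
  have ht : 0 < t := by positivity
  have htT : 4 * t * ‖T‖ ^ 2 ≤ 1 := by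
    have : 4 * t * (‖T‖ ^ 2 + 1) = 1 := by simp only [t]; field_simp
    linarith
  refine ⟨-(t * ⟪T x, x⟫), (numRadius_rankOne_self_sub_smul_le T hx ht.le htT).trans_lt ?_⟩
  have : 0 < t * ⟪T x, x⟫ ^ 2 := by positivity
  linarith

end NumericalRadius

theorem stmt13_general {H : Type*} [NormedAddCommGroup H] [InnerProductSpace ℝ H]
    (T : H →L[ℝ] H) :
    numRadius T = 0 ↔ ∀ x : H, ‖x‖ = 1 → nrOrth (rankOne x x) T := by
  refine ⟨fun hT x _ => nrOrth_of_numRadius_eq_zero _ hT, fun h => ?_⟩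
  refine numRadius_eq_zero_iff.mpr fun x hx => ?_
  by_contra hTx
  obtain ⟨l, hl⟩ := exists_numRadius_rankOne_self_add_smul_lt_one T hx hTx
  have horth := h x hx l
  rw [numRadius_rankOne_self hx] at horth
  linarith

theorem stmt13 {H : Type*} [NormedAddCommGroup H] [InnerProductSpace ℝ H] [CompleteSpace H]
    (T : H →L[ℝ] H) (hT : IsCompactOperator T) :
    numRadius T = 0 ↔ ∀ x : H, ‖x‖ = 1 → nrOrth (rankOne x x) T :=
  stmt13_general T
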